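/- arXiv:1807.10683 — 2 statements merged into one kernel-verified Lean document; each statement's English description precedes it below -/
import Mathlib

section
/- Let H be a strongly primary monoid with Λ(H) < ∞. Then ρ_{Λ(H)}(H) = ∞, and hence ρ_k(H) = ∞ for all k ≥ Λ(H). In particular, H is not half-factorial. -/
open Pointwise

section MonoidDefs

variable {G : Type*} [CommGroup G]

/-- `x` is a unit of the submonoid `H`. -/
def IsHUnit (H : Submonoid G) (x : G) : Prop := x ∈ H ∧ x⁻¹ ∈ H

/-- The set of non-units of `H`. -/
def nonUnits (H : Submonoid G) : Set G := {x | x ∈ H ∧ x⁻¹ ∉ H}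

/-- `u` is an atom (irreducible element) of `H`. -/
def IsHAtom (H : Submonoid G) (u : G) : Prop :=
  u ∈ H ∧ ¬ IsHUnit H u ∧
    ∀ a b : G, a ∈ H → b ∈ H → u = a * b → IsHUnit H a ∨ IsHUnit H b

/-- `G` is the quotient group of `H`. -/
def IsQuotientGroup (H : Submonoid G) : Prop :=
  ∀ g : G, ∃ a ∈ H, ∃ b ∈ H, g = a / b

/-- `H` is a primary monoid. -/
def IsPrimaryMonoid (H : Submonoid G) : Prop :=
  (nonUnits H).Nonempty ∧
    ∀ a ∈ nonUnits H, ∀ b ∈ nonUnits H, ∃ n : ℕ, 0 < n ∧ b ^ n ∈ a • (H : Set G)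

/-- `H` is a strongly primary monoid. -/
def IsStronglyPrimary (H : Submonoid G) : Prop :=
  (nonUnits H).Nonempty ∧
    ∀ a ∈ nonUnits H, ∃ n : ℕ, 0 < n ∧ nonUnits H ^ n ⊆ a • (H : Set G)

/-- `x` and `y` are associated in `H`. -/
def HAssoc (H : Submonoid G) (x y : G) : Prop := IsHUnit H (x / y)

/-- The set of lengths of `a`: all `k` such that `a` is a product of `k` atoms
(up to a unit of `H`). -/
def lengthSet (H : Submonoid G) (a : G) : Set ℕ :=
  {k | ∃ s : Multiset G, Multiset.card s = k ∧ (∀ v ∈ s, IsHAtom H v) ∧ HAssoc H a s.prod}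

/-- `Λ(S)`, the supremum of the minimal factorization lengths of elements of `S`. -/
noncomputable def Lambda (H : Submonoid G) (S : Set G) : ℕ∞ :=
  ⨆ (a : G) (_ : a ∈ S) (_ : (lengthSet H a).Nonempty), ((sInf (lengthSet H a) : ℕ) : ℕ∞)

/-- `ρ_k(H)`, the supremum of `sup L(a)` over all `a` with `k ∈ L(a)`. -/
noncomputable def rho (H : Submonoid G) (k : ℕ∞) : ℕ∞ :=
  ⨆ (a : G) (_ : a ∈ H) (_ : ∃ n ∈ lengthSet H a, (n : ℕ∞) = k),
    ⨆ (n : ℕ) (_ : n ∈ lengthSet H a), (n : ℕ∞)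

/-- The elasticity `ρ(H) = sup { m/n : m, n ∈ L(a), a ∈ H }`. -/
noncomputable def elasticity (H : Submonoid G) : ENNReal :=
  ⨆ (a : G) (_ : a ∈ H) (m : ℕ) (_ : m ∈ lengthSet H a) (n : ℕ) (_ : n ∈ lengthSet H a),
    (m : ENNReal) / (n : ENNReal)

/-- `z` is a factorization of `a`: a multiset of atoms whose product is associated to `a`. -/
def IsFactorization (H : Submonoid G) (a : G) (z : Multiset G) : Prop :=
  (∀ v ∈ z, IsHAtom H v) ∧ HAssoc H a z.prod

/-- The distance between two factorizations: cancel a (maximal) common part (up to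
associates) and take the maximum of the lengths of the remaining parts. -/
noncomputable def fdist (H : Submonoid G) (z z' : Multiset G) : ℕ :=
  sInf {N : ℕ | ∃ x x' v w : Multiset G, z = x + v ∧ z' = x' + w ∧
    Multiset.Rel (HAssoc H) x x' ∧ max (Multiset.card v) (Multiset.card w) ≤ N}

/-- `N` is a tame bound for the atom `u`: for every multiple `a` of `u` and every
factorization `z` of `a` there is a factorization `z'` of `a` containing `u`
with `d(z, z') ≤ N`. -/
def TameBound (H : Submonoid G) (u : G) (N : ℕ) : Prop :=
  ∀ a ∈ H, (∃ b ∈ H, a = u * b) → ∀ z : Multiset G, IsFactorization H a z →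
    ∃ z' : Multiset G, IsFactorization H a z' ∧ (∃ v ∈ z', HAssoc H v u) ∧ fdist H z z' ≤ N

/-- `H` is locally tame: `t(u) < ∞` for every atom `u`. -/
def LocallyTame (H : Submonoid G) : Prop :=
  ∀ u : G, IsHAtom H u → ∃ N : ℕ, TameBound H u N

/-- `H` is globally tame: `sup { t(u) : u an atom } < ∞`. -/
def GloballyTame (H : Submonoid G) : Prop :=
  ∃ N : ℕ, ∀ u : G, IsHAtom H u → TameBound H u N

/-- The local tame degree `t(u)` of `u`. -/
noncomputable def tameDeg (H : Submonoid G) (u : G) : ℕ∞ :=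
  sInf {N : ℕ∞ | ∃ n : ℕ, TameBound H u n ∧ N = (n : ℕ∞)}

/-- `N` is an omega bound for `a`: whenever `a` divides a product of elements of `H`,
it divides a subproduct with at most `N` factors. -/
def OmegaBound (H : Submonoid G) (a : G) (N : ℕ) : Prop :=
  ∀ s : Multiset G, (∀ x ∈ s, x ∈ H) → (∃ c ∈ H, s.prod = a * c) →
    ∃ t : Multiset G, t ≤ s ∧ Multiset.card t ≤ N ∧ ∃ c ∈ H, t.prod = a * c

/-- The omega invariant `ω(a)`. -/
noncomputable def omegaDeg (H : Submonoid G) (a : G) : ℕ∞ :=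
  sInf {N : ℕ∞ | ∃ n : ℕ, OmegaBound H a n ∧ N = (n : ℕ∞)}

/-- `M(x)`: the smallest `n ≥ 1` with `mⁿ ⊆ xH`. -/
noncomputable def Mdeg (H : Submonoid G) (x : G) : ℕ :=
  sInf {n : ℕ | 0 < n ∧ nonUnits H ^ n ⊆ x • (H : Set G)}

/-- The complete integral closure `Ĥ` of `H` (inside the quotient group). -/
def hatH (H : Submonoid G) : Set G := {x | ∃ c ∈ H, ∀ n : ℕ, c * x ^ n ∈ H}

/-- The set of non-units of `Ĥ`. -/
def hatNonUnits (H : Submonoid G) : Set G := {x | x ∈ hatH H ∧ x⁻¹ ∉ hatH H}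

/-- The root closure `H̃` of `H`. -/
def tildeH (H : Submonoid G) : Set G := {x | ∃ n : ℕ, 0 < n ∧ x ^ n ∈ H}

/-- The set of non-units of `H̃`. -/
def tildeNonUnits (H : Submonoid G) : Set G := {x | x ∈ tildeH H ∧ x⁻¹ ∉ tildeH H}

/-- The seminormal closure `H'` of `H`. -/
def seminormalClosure (H : Submonoid G) : Set G :=
  {x | ∃ N : ℕ, ∀ n : ℕ, N ≤ n → x ^ n ∈ H}

/-- The conductor `(H : Ĥ)`. -/
def conductorH (H : Submonoid G) : Set G := {z | ∀ x ∈ hatH H, z * x ∈ H}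

/-- `Ĥ` is a primary monoid. -/
def HatPrimary (H : Submonoid G) : Prop :=
  (hatNonUnits H).Nonempty ∧
    ∀ a ∈ hatNonUnits H, ∀ b ∈ hatNonUnits H,
      ∃ n : ℕ, 0 < n ∧ ∃ c ∈ hatH H, b ^ n = a * c

/-- `Ĥ` is a valuation monoid. -/
def HatValuation (H : Submonoid G) : Prop :=
  ∀ a ∈ hatH H, ∀ b ∈ hatH H,
    (∃ c ∈ hatH H, b = a * c) ∨ (∃ c ∈ hatH H, a = b * c)

/-- `H` is atomic. -/
def Atomic (H : Submonoid G) : Prop :=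
  ∀ a ∈ nonUnits H, ∃ s : Multiset G, (∀ v ∈ s, IsHAtom H v) ∧ a = s.prod

/-- `H` is a discrete valuation monoid, i.e. `H_red ≅ (ℕ₀, +)`. -/
def IsDiscreteValuationMonoid (H : Submonoid G) : Prop :=
  ∃ p ∈ H, ¬ IsHUnit H p ∧ ∀ a ∈ H, ∃ n : ℕ, ∃ ε : G, IsHUnit H ε ∧ a = ε * p ^ n

end MonoidDefs

/-! If `mⁿ ⊆ aH`, then `a` is associated to no product of more than `n` non-units, so a
factorization of a non-unit into the largest possible number of non-units consists of atoms; in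
particular there is an atom `u`. Since `Λ(H) < ∞`, for every `N` some factorization of `u^N` has
length `m ≤ Λ(H)`, so `u^N · u^(k - m)` has factorizations of lengths `k` and `N + k - m ≥ N`
whenever `k ≥ Λ(H)`. -/

theorem Multiset.exists_le_card_eq {α : Type*} {s : Multiset α} {n : ℕ}
    (hn : n ≤ Multiset.card s) : ∃ t ≤ s, Multiset.card t = n := by
  have hne : Multiset.powersetCard n s ≠ 0 := by
    rw [← Multiset.card_pos, Multiset.card_powersetCard]
    exact Nat.choose_pos hn
  obtain ⟨t, ht⟩ := Multiset.exists_mem_of_ne_zero hne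
  exact ⟨t, Multiset.mem_powersetCard.mp ht⟩

theorem Set.multiset_prod_mem_pow {M : Type*} [CommMonoid M] {S : Set M} {s : Multiset M}
    (hs : ∀ x ∈ s, x ∈ S) : s.prod ∈ S ^ Multiset.card s := by
  simpa [Multiset.map_const', Multiset.prod_replicate] using
    Set.multiset_prod_mem_multiset_prod s (fun _ => S) id hs

section StronglyPrimary

variable {G : Type*} [CommGroup G] {H : Submonoid G}

theorem isHUnit_one : IsHUnit H 1 := ⟨H.one_mem, by simp [H.one_mem]⟩

theorem IsHUnit.mul {x y : G} (hx : IsHUnit H x) (hy : IsHUnit H y) : IsHUnit H (x * y) :=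
  ⟨H.mul_mem hx.1 hy.1, by rw [mul_inv]; exact H.mul_mem hx.2 hy.2⟩

theorem hAssoc_refl (x : G) : HAssoc H x x := by
  simpa [HAssoc] using isHUnit_one

theorem mem_nonUnits_iff {x : G} : x ∈ nonUnits H ↔ x ∈ H ∧ ¬ IsHUnit H x := by
  simp +contextual [nonUnits, IsHUnit]

theorem mul_mem_nonUnits {x y : G} (hx : x ∈ H) (hy : y ∈ nonUnits H) :
    x * y ∈ nonUnits H := by
  refine ⟨H.mul_mem hx hy.1, fun h => hy.2 ?_⟩
  simpa using H.mul_mem hx h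

theorem multiset_prod_mem_nonUnits {s : Multiset G} (hs : ∀ x ∈ s, x ∈ nonUnits H)
    (hne : s ≠ 0) : s.prod ∈ nonUnits H := by
  classical
  obtain ⟨d, hd⟩ := Multiset.exists_mem_of_ne_zero hne
  rw [← Multiset.cons_erase hd, Multiset.prod_cons, mul_comm]
  exact mul_mem_nonUnits
    (H.multiset_prod_mem _ fun x hx => (hs x (Multiset.mem_of_mem_erase hx)).1) (hs d hd)

theorem card_le_of_hAssoc_prod {a : G} {n : ℕ} (hn : nonUnits H ^ n ⊆ a • (H : Set G))
    {s : Multiset G} (hs : ∀ x ∈ s, x ∈ nonUnits H) (has : HAssoc H a s.prod) :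
    Multiset.card s ≤ n := by
  classical
  by_contra! hlt
  obtain ⟨t, hts, htn⟩ := Multiset.exists_le_card_eq hlt.le
  obtain ⟨h, hh, hth⟩ := Set.mem_smul_set.mp
    (hn (htn ▸ Set.multiset_prod_mem_pow fun x hx => hs x (Multiset.mem_of_le hts hx)))
  have hrest : (s - t).prod ∈ nonUnits H := by
    refine multiset_prod_mem_nonUnits (fun x hx => hs x (Multiset.mem_of_le
      (Multiset.sub_le_self s t) hx)) fun h0 => ?_
    have := Multiset.card_le_card (tsub_eq_zero_iff_le.mp h0)
    omega
  have hprod : s.prod = a * (h * (s - t).prod) := by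
    rw [← mul_assoc, ← smul_eq_mul a h, hth, ← Multiset.prod_add, add_tsub_cancel_of_le hts]
  apply (mul_mem_nonUnits hh hrest).2
  simpa [HAssoc, IsHUnit, hprod] using has.1

theorem exists_longer_of_not_isHAtom {a v : G} {s : Multiset G}
    (hs : ∀ x ∈ s, x ∈ nonUnits H) (has : HAssoc H a s.prod) (hv : v ∈ s)
    (hva : ¬ IsHAtom H v) :
    ∃ s' : Multiset G, (∀ x ∈ s', x ∈ nonUnits H) ∧ HAssoc H a s'.prod ∧
      Multiset.card s' = Multiset.card s + 1 := by
  classical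
  obtain ⟨x, y, hx, hy, hxy, hxu, hyu⟩ : ∃ x y : G, x ∈ H ∧ y ∈ H ∧ v = x * y ∧
      ¬ IsHUnit H x ∧ ¬ IsHUnit H y := by
    simpa [IsHAtom, (mem_nonUnits_iff.mp (hs v hv)).1, (mem_nonUnits_iff.mp (hs v hv)).2]
      using hva
  refine ⟨x ::ₘ y ::ₘ s.erase v, ?_, ?_, ?_⟩
  · intro z hz
    rcases Multiset.mem_cons.mp hz with rfl | hz
    · exact mem_nonUnits_iff.mpr ⟨hx, hxu⟩
    rcases Multiset.mem_cons.mp hz with rfl | hz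
    · exact mem_nonUnits_iff.mpr ⟨hy, hyu⟩
    · exact hs z (Multiset.mem_of_mem_erase hz)
  · rwa [Multiset.prod_cons, Multiset.prod_cons, ← mul_assoc, ← hxy, ← Multiset.prod_cons,
      Multiset.cons_erase hv]
  · rw [Multiset.card_cons, Multiset.card_cons, Multiset.card_erase_add_one hv]

theorem exists_isHAtom_of_isStronglyPrimary (hsp : IsStronglyPrimary H) :
    ∃ u : G, IsHAtom H u := by
  obtain ⟨a, ha⟩ := hsp.1
  obtain ⟨n, -, hn⟩ := hsp.2 a ha
  set K : Set ℕ := {k | ∃ s : Multiset G, (∀ x ∈ s, x ∈ nonUnits H) ∧ HAssoc H a s.prod ∧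
    Multiset.card s = k}
  have h1K : 1 ∈ K := ⟨{a}, by simpa using ha, by simpa using hAssoc_refl a, rfl⟩
  have hbdd : BddAbove K := ⟨n, by
    rintro k ⟨s, hs, has, rfl⟩
    exact card_le_of_hAssoc_prod hn hs has⟩
  obtain ⟨s, hs, has, hcard⟩ := Nat.sSup_mem ⟨1, h1K⟩ hbdd
  obtain ⟨v, hv⟩ := Multiset.card_pos_iff_exists_mem.mp (hcard ▸ le_csSup hbdd h1K)
  refine ⟨v, by_contra fun hva => ?_⟩
  obtain ⟨s', hs', has', hcard'⟩ := exists_longer_of_not_isHAtom hs has hv hva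
  have := le_csSup hbdd ⟨s', hs', has', rfl⟩
  omega

theorem lengthSet_mul {a b : G} {j k : ℕ} (hj : j ∈ lengthSet H a) (hk : k ∈ lengthSet H b) :
    j + k ∈ lengthSet H (a * b) := by
  obtain ⟨s, rfl, hs, has⟩ := hj
  obtain ⟨t, rfl, ht, hbt⟩ := hk
  refine ⟨s + t, Multiset.card_add s t, fun v hv => ?_, ?_⟩
  · rcases Multiset.mem_add.mp hv with h | h
    exacts [hs v h, ht v h]
  · rw [HAssoc, Multiset.prod_add, ← div_mul_div_comm]
    exact has.mul hbt

theorem mem_lengthSet_pow {u : G} (hu : IsHAtom H u) (n : ℕ) : n ∈ lengthSet H (u ^ n) :=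
  ⟨Multiset.replicate n u, Multiset.card_replicate n u,
    fun v hv => Multiset.eq_of_mem_replicate hv ▸ hu, by
      simpa [Multiset.prod_replicate] using hAssoc_refl (u ^ n)⟩

theorem sInf_lengthSet_le_Lambda {a : G} (ha : a ∈ H) (hne : (lengthSet H a).Nonempty) :
    ((sInf (lengthSet H a) : ℕ) : ℕ∞) ≤ Lambda H (H : Set G) :=
  le_iSup_of_le a (le_iSup_of_le ha (le_iSup_of_le hne le_rfl))

theorem le_rho {a : G} {k n : ℕ} (ha : a ∈ H) (hk : k ∈ lengthSet H a)
    (hn : n ∈ lengthSet H a) : (n : ℕ∞) ≤ rho H k :=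
  le_iSup_of_le a (le_iSup_of_le ha (le_iSup_of_le ⟨k, hk, rfl⟩
    (le_iSup_of_le n (le_iSup_of_le hn le_rfl))))

theorem rho_eq_top_of_forall_exists {k : ℕ}
    (h : ∀ N : ℕ, ∃ a ∈ H, k ∈ lengthSet H a ∧ ∃ n ∈ lengthSet H a, N ≤ n) :
    rho H k = ⊤ := by
  refine ENat.eq_top_iff_forall_ge.mpr fun N => ?_
  obtain ⟨a, ha, hk, n, hn, hNn⟩ := h N
  exact (Nat.cast_le.mpr hNn).trans (le_rho ha hk hn)

theorem exists_lengths_of_Lambda_le {u : G} (hu : IsHAtom H u) {k : ℕ}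
    (hk : Lambda H (H : Set G) ≤ k) (N : ℕ) :
    ∃ a ∈ H, k ∈ lengthSet H a ∧ ∃ n ∈ lengthSet H a, N ≤ n := by
  have hN := mem_lengthSet_pow hu N
  set m := sInf (lengthSet H (u ^ N))
  have hm : m ∈ lengthSet H (u ^ N) := Nat.sInf_mem ⟨N, hN⟩
  have hmk : m ≤ k := by
    exact_mod_cast (sInf_lengthSet_le_Lambda (pow_mem hu.1 N) ⟨N, hN⟩).trans hk
  refine ⟨u ^ N * u ^ (k - m), H.mul_mem (pow_mem hu.1 N) (pow_mem hu.1 _), ?_,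
    N + (k - m), lengthSet_mul hN (mem_lengthSet_pow hu _), Nat.le_add_right N _⟩
  simpa [Nat.add_sub_cancel' hmk] using lengthSet_mul hm (mem_lengthSet_pow hu (k - m))

end StronglyPrimary

theorem stmt11_general {G : Type*} [CommGroup G] (H : Submonoid G)
    (hsp : IsStronglyPrimary H) (hL : Lambda H (H : Set G) < ⊤) :
    rho H (Lambda H (H : Set G)) = ⊤ ∧
    (∀ k : ℕ, Lambda H (H : Set G) ≤ (k : ℕ∞) → rho H (k : ℕ∞) = ⊤) ∧
    ¬ (∀ a ∈ H, (lengthSet H a).Subsingleton) := by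
  obtain ⟨u, hu⟩ := exists_isHAtom_of_isStronglyPrimary hsp
  have hrho : ∀ k : ℕ, Lambda H (H : Set G) ≤ k → rho H k = ⊤ := fun k hk =>
    rho_eq_top_of_forall_exists (exists_lengths_of_Lambda_le hu hk)
  lift Lambda H (H : Set G) to ℕ using hL.ne with lam hlam
  refine ⟨hrho lam le_rfl, hrho, fun hhf => ?_⟩
  obtain ⟨a, ha, hlen, n, hn, hlt⟩ := exists_lengths_of_Lambda_le hu hlam.ge (lam + 1)
  have := hhf a ha hlen hn
  omega

/-- Let `H` be a strongly primary monoid with `Λ(H) < ∞`. Then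
`ρ_{Λ(H)}(H) = ∞`, hence `ρ_k(H) = ∞` for all `k ≥ Λ(H)`; in particular `H` is not
half-factorial. -/
theorem stmt11 {G : Type*} [CommGroup G] (H : Submonoid G) (hq : IsQuotientGroup H)
    (hsp : IsStronglyPrimary H) (hL : Lambda H (H : Set G) < ⊤) :
    rho H (Lambda H (H : Set G)) = ⊤ ∧
    (∀ k : ℕ, Lambda H (H : Set G) ≤ (k : ℕ∞) → rho H (k : ℕ∞) = ⊤) ∧
    ¬ (∀ a ∈ H, (lengthSet H a).Subsingleton) :=
  stmt11_general H hsp hL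
end

section
/- Let H be a strongly primary monoid and x ∈ q(H). Then M(x) < ∞ and Λ(H \ xH) < M(x); that is, every element of H not divisible by x (in q(H)) has a factorization into fewer than M(x) atoms. -/
open Pointwise

/-!
If `x = a / b` with `a, b ∈ H`, then `aH ⊆ xH`, and `mⁿ ⊆ aH` for some `n` because `H` is
strongly primary (or `n = 1` if `a` is a unit), so `M(x)` exists. A product of `k ≥ M(x)`
atoms lies in `m^{M(x)} ⊆ xH`; hence every factorization of an element outside `xH` has fewer
than `M(x)` atoms. Such factorizations exist because `H` is atomic: `M(bc) > M(b)` for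
non-units `b, c`, so splitting a non-atom strictly decreases `M`.
-/

section StronglyPrimary

variable {G : Type*} [CommGroup G] {H : Submonoid G}

lemma mem_smul_coe_iff {x z : G} : z ∈ x • (H : Set G) ↔ x⁻¹ * z ∈ H := by
  rw [Set.mem_smul_set_iff_inv_smul_mem, smul_eq_mul, SetLike.mem_coe]

lemma smul_coe_subset_smul_coe {x y : G} (h : x⁻¹ * y ∈ H) :
    y • (H : Set G) ⊆ x • (H : Set G) := fun z hz => by
  rw [mem_smul_coe_iff] at hz ⊢
  simpa [mul_assoc] using H.mul_mem h hz

lemma nonUnits_subset : nonUnits H ⊆ (H : Set G) := fun _ hz => hz.1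

lemma mul_mem_nonUnits_s15 {b c : G} (hb : b ∈ nonUnits H) (hc : c ∈ H) : b * c ∈ nonUnits H :=
  ⟨H.mul_mem hb.1 hc, fun h => hb.2 <| by simpa [mul_comm] using H.mul_mem hc h⟩

lemma IsHAtom.mem_nonUnits {u : G} (hu : IsHAtom H u) : u ∈ nonUnits H :=
  ⟨hu.1, fun h => hu.2.1 ⟨hu.1, h⟩⟩

lemma multiset_prod_mem_nonUnits_pow {s : Multiset G} (hs : ∀ v ∈ s, v ∈ nonUnits H) :
    s.prod ∈ nonUnits H ^ Multiset.card s := by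
  simpa using Set.multiset_prod_mem_multiset_prod s (fun _ => nonUnits H) id hs

lemma nonUnits_pow_subset_smul_of_le {x : G} {n k : ℕ}
    (h : nonUnits H ^ n ⊆ x • (H : Set G)) (hnk : n ≤ k) : nonUnits H ^ k ⊆ x • (H : Set G) := by
  rw [← Nat.add_sub_cancel' hnk, pow_add]
  rintro _ ⟨p, hp, q, hq, rfl⟩
  have hp' := mem_smul_coe_iff.mp (h hp)
  have hq' := Submonoid.pow_subset nonUnits_subset hq
  rw [mem_smul_coe_iff, ← mul_assoc]
  exact H.mul_mem hp' hq'

lemma mem_smul_of_mem_lengthSet {x a : G} {k : ℕ} (hk : k ∈ lengthSet H a)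
    (h : nonUnits H ^ k ⊆ x • (H : Set G)) : a ∈ x • (H : Set G) := by
  obtain ⟨s, rfl, hatoms, hassoc⟩ := hk
  have hs := mem_smul_coe_iff.mp <| h <|
    multiset_prod_mem_nonUnits_pow fun v hv => (hatoms v hv).mem_nonUnits
  rw [mem_smul_coe_iff]
  simpa [mul_assoc, mul_left_comm] using H.mul_mem hassoc.1 hs

lemma lt_of_mem_lengthSet_of_notMem_smul {x a : G} {k N : ℕ}
    (hN : nonUnits H ^ N ⊆ x • (H : Set G)) (ha : a ∉ x • (H : Set G))
    (hk : k ∈ lengthSet H a) : k < N :=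
  lt_of_not_ge fun hNk => ha (mem_smul_of_mem_lengthSet hk (nonUnits_pow_subset_smul_of_le hN hNk))

lemma Mdeg_spec {x : G} (h : ∃ n : ℕ, 0 < n ∧ nonUnits H ^ n ⊆ x • (H : Set G)) :
    0 < Mdeg H x ∧ nonUnits H ^ Mdeg H x ⊆ x • (H : Set G) :=
  Nat.sInf_mem h

lemma Mdeg_le {x : G} {n : ℕ} (hn : 0 < n) (h : nonUnits H ^ n ⊆ x • (H : Set G)) :
    Mdeg H x ≤ n :=
  Nat.sInf_le ⟨hn, h⟩

lemma nonUnits_pow_subset_smul_of_pow_succ_subset {b c : G} {k : ℕ} (hc : c ∈ nonUnits H)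
    (h : nonUnits H ^ (k + 1) ⊆ (b * c) • (H : Set G)) : nonUnits H ^ k ⊆ b • (H : Set G) := by
  intro z hz
  have hzc := mem_smul_coe_iff.mp <| h <| pow_succ (nonUnits H) k ▸ Set.mul_mem_mul hz hc
  rw [mem_smul_coe_iff]
  rwa [show (b * c)⁻¹ * (z * c) = b⁻¹ * z by rw [mul_comm b c, mul_comm z c]; group] at hzc

theorem IsStronglyPrimary.exists_nonUnits_pow_subset_smul (hq : IsQuotientGroup H)
    (hsp : IsStronglyPrimary H) (x : G) :
    ∃ n : ℕ, 0 < n ∧ nonUnits H ^ n ⊆ x • (H : Set G) := by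
  obtain ⟨a, ha, b, hb, rfl⟩ := hq x
  have haxH : a • (H : Set G) ⊆ (a / b) • (H : Set G) :=
    smul_coe_subset_smul_coe (by simpa [div_eq_mul_inv, mul_assoc] using hb)
  by_cases hunit : a⁻¹ ∈ H
  · refine ⟨1, one_pos, fun z hz => haxH ?_⟩
    rw [pow_one] at hz
    exact mem_smul_coe_iff.mpr (H.mul_mem hunit hz.1)
  · obtain ⟨n, hn, hsub⟩ := hsp.2 a ⟨ha, hunit⟩
    exact ⟨n, hn, hsub.trans haxH⟩

theorem IsStronglyPrimary.Mdeg_lt_Mdeg_mul (hsp : IsStronglyPrimary H) {b c : G}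
    (hb : b ∈ nonUnits H) (hc : c ∈ nonUnits H) : Mdeg H b < Mdeg H (b * c) := by
  obtain ⟨hpos, hsub⟩ := Mdeg_spec (hsp.2 _ (mul_mem_nonUnits_s15 hb hc.1))
  obtain ⟨k, hk⟩ := Nat.exists_eq_add_one_of_ne_zero hpos.ne'
  rw [hk] at hsub ⊢
  have hbk := nonUnits_pow_subset_smul_of_pow_succ_subset hc hsub
  have hkpos : 0 < k := Nat.pos_of_ne_zero fun hk0 => hb.2 <| by
    subst hk0
    simpa using mem_smul_coe_iff.mp (hbk (Set.mem_one.mpr rfl))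
  exact Nat.lt_succ_of_le (Mdeg_le hkpos hbk)

theorem IsStronglyPrimary.atomic (hsp : IsStronglyPrimary H) : Atomic H := by
  intro a ha
  induction hM : Mdeg H a using Nat.strong_induction_on generalizing a with
  | _ n ih =>
    by_cases hatom : IsHAtom H a
    · exact ⟨{a}, by simpa using hatom, by simp⟩
    have hnu : ¬ IsHUnit H a := fun h => ha.2 h.2
    simp only [IsHAtom, not_and, not_forall, not_or] at hatom
    obtain ⟨b, c, hbH, hcH, rfl, hbu, hcu⟩ := hatom ha.1 hnu
    have hb : b ∈ nonUnits H := ⟨hbH, fun h => hbu ⟨hbH, h⟩⟩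
    have hc : c ∈ nonUnits H := ⟨hcH, fun h => hcu ⟨hcH, h⟩⟩
    have hlt_b : Mdeg H b < n := hM ▸ hsp.Mdeg_lt_Mdeg_mul hb hc
    have hlt_c : Mdeg H c < n := hM ▸ mul_comm c b ▸ hsp.Mdeg_lt_Mdeg_mul hc hb
    obtain ⟨sb, hsb, rfl⟩ := ih _ hlt_b _ hb rfl
    obtain ⟨sc, hsc, rfl⟩ := ih _ hlt_c _ hc rfl
    refine ⟨sb + sc, fun v hv => ?_, (Multiset.prod_add sb sc).symm⟩
    exact (Multiset.mem_add.mp hv).elim (hsb v) (hsc v)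

lemma Atomic.lengthSet_nonempty (hA : Atomic H) {a : G} (ha : a ∈ H) :
    (lengthSet H a).Nonempty := by
  by_cases hunit : a⁻¹ ∈ H
  · exact ⟨0, 0, rfl, by simp, by simpa [HAssoc] using ⟨ha, hunit⟩⟩
  · obtain ⟨s, hs, rfl⟩ := hA a ⟨ha, hunit⟩
    exact ⟨_, s, rfl, hs, by simp [HAssoc, IsHUnit]⟩

lemma Lambda_lt_of_forall_lt {S : Set G} {N : ℕ} (hN : 0 < N)
    (h : ∀ a ∈ S, ∀ k ∈ lengthSet H a, k < N) : Lambda H S < N := by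
  have hle : Lambda H S ≤ ((N - 1 : ℕ) : ℕ∞) :=
    iSup₂_le fun a ha => iSup_le fun hne =>
      Nat.cast_le.mpr (Nat.le_pred_of_lt (h a ha _ (Nat.sInf_mem hne)))
  exact hle.trans_lt (Nat.cast_lt.mpr (Nat.pred_lt hN.ne'))

end StronglyPrimary

/-- Let `H` be a strongly primary monoid and `x ∈ q(H)`. Then
`M(x) < ∞` and `Λ(H \\ xH) < M(x)`: every element of `H` not divisible by `x` has a
factorization into fewer than `M(x)` atoms. -/
theorem stmt15 {G : Type*} [CommGroup G] (H : Submonoid G) (hq : IsQuotientGroup H)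
    (hsp : IsStronglyPrimary H) (x : G) :
    (∃ n : ℕ, 0 < n ∧ nonUnits H ^ n ⊆ x • (H : Set G)) ∧
    Lambda H {a : G | a ∈ H ∧ a ∉ x • (H : Set G)} < ((Mdeg H x : ℕ) : ℕ∞) ∧
    ∀ a ∈ H, a ∉ x • (H : Set G) → ∃ k ∈ lengthSet H a, k < Mdeg H x := by
  have hM := hsp.exists_nonUnits_pow_subset_smul hq x
  obtain ⟨hpos, hsub⟩ := Mdeg_spec hM
  have hlt : ∀ a ∉ x • (H : Set G), ∀ k ∈ lengthSet H a, k < Mdeg H x :=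
    fun _ ha _ hk => lt_of_mem_lengthSet_of_notMem_smul hsub ha hk
  refine ⟨hM, Lambda_lt_of_forall_lt hpos fun a ha => hlt a ha.2, fun a ha hax => ?_⟩
  obtain ⟨k, hk⟩ := hsp.atomic.lengthSet_nonempty ha
  exact ⟨k, hk, hlt a hax k hk⟩
end
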